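/- Let p be an odd prime, F a positive odd multiple of p, a an integer with 0 < a < F and gcd(a, p) = 1, r a positive integer, and n an even positive integer. Then in ℚ_p, Σ_{l=0}^{n-1} (-1)^{Fl+a}/(Fl+a)^{r} = −((-1)^a/2) · Σ_{k=1}^{∞} (r/(r+k)) · binom(−r−1, k) · (nF)^k · a^{−r−k} · Σ_{j=0}^{∞} binom(−(r+k), j) (F/a)^j E_j, where both infinite series converge p-adically. -/

import Mathlib

/-- The Euler numbers `E₀ = 1`, `∑_{k=0}^{n} C(n,k) Eₖ + Eₙ = 0` for `n ≥ 1`. -/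
noncomputable def eulerNumber : ℕ → ℚ
  | 0 => 1
  | n + 1 => (-1/2) * ∑ k ∈ (Finset.range (n+1)).attach,
      ((n+1).choose k.1 : ℚ) * eulerNumber k.1
  decreasing_by exact Finset.mem_range.mp k.2

/-- The generalized binomial coefficient `binom(x, m) = x(x−1)⋯(x−m+1)/m!`. -/
noncomputable def qbinom (x : ℚ) (m : ℕ) : ℚ :=
  (descPochhammer ℚ m).eval x / m.factorial



open Finset

lemma eulerNumber_zero : eulerNumber 0 = 1 := by rw [eulerNumber]

lemma eulerNumber_succ (n : ℕ) :
    eulerNumber (n+1) = (-1/2) * ∑ k ∈ range (n+1), ((n+1).choose k : ℚ) * eulerNumber k := by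
  rw [eulerNumber]
  congr 1
  rw [← Finset.sum_attach (range (n+1)) (fun k => ((n+1).choose k : ℚ) * eulerNumber k)]

lemma euler_rec (m : ℕ) (hm : 0 < m) :
    ∑ k ∈ range (m+1), (m.choose k : ℚ) * eulerNumber k + eulerNumber m = 0 := by
  obtain ⟨n, rfl⟩ := Nat.exists_eq_add_of_lt hm
  simp only [zero_add]
  rw [sum_range_succ, Nat.choose_self]
  have h := eulerNumber_succ n
  have : ∑ k ∈ range (n+1), ((n+1).choose k : ℚ) * eulerNumber k = -2 * eulerNumber (n+1) := by
    rw [h]; ring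
  rw [this]
  push_cast
  ring

noncomputable def epoly (j : ℕ) (x : ℚ) : ℚ :=
  ∑ i ∈ range (j+1), (j.choose i : ℚ) * eulerNumber i * x^(j-i)

lemma epoly_zero_eval (j : ℕ) : epoly j 0 = eulerNumber j := by
  unfold epoly
  rw [Finset.sum_eq_single_of_mem j (self_mem_range_succ j)]
  · simp
  · intro i hi hij
    have hij' : i < j := by
      have := mem_range.mp hi; omega
    rw [zero_pow (by omega : j - i ≠ 0)]
    ring

lemma choose_mul_choose_q (j i s : ℕ) :
    (j.choose i : ℚ) * ((j-i).choose s) = (j.choose s : ℚ) * ((j-s).choose i) := by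
  by_cases hij : i ≤ j
  · by_cases hs : s ≤ j - i
    · have his : i + s ≤ j := by omega
      have h1 := Nat.choose_mul (n := j) (show i ≤ i+s by omega)
      have h2 := Nat.choose_mul (n := j) (show s ≤ i+s by omega)
      have e1 : (i+s)-i = s := by omega
      have e2 : (i+s)-s = i := by omega
      rw [e1] at h1
      rw [e2] at h2
      have hsym : (i+s).choose i = (i+s).choose s := by
        rw [← Nat.choose_symm (show s ≤ i+s by omega)]; congr 1; omega
      have key : j.choose i * (j-i).choose s = j.choose s * (j-s).choose i := by
        rw [← h1, hsym, h2]
      exact_mod_cast congrArg (Nat.cast : ℕ → ℚ) key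
    · have h1 : (j-i).choose s = 0 := Nat.choose_eq_zero_of_lt (by omega)
      by_cases hsj : s ≤ j
      · have h2 : (j-s).choose i = 0 := Nat.choose_eq_zero_of_lt (by omega)
        rw [h1, h2]; simp
      · have h2 : j.choose s = 0 := Nat.choose_eq_zero_of_lt (by omega)
        rw [h1, h2]; simp
  · by_cases hsj : s ≤ j
    · have h2 : (j-s).choose i = 0 := Nat.choose_eq_zero_of_lt (by omega)
      rw [Nat.choose_eq_zero_of_lt (by omega : j < i), h2]; simp
    · have h2 : j.choose s = 0 := Nat.choose_eq_zero_of_lt (by omega)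
      rw [Nat.choose_eq_zero_of_lt (by omega : j < i), h2]; simp

lemma epoly_add_one (j : ℕ) (x : ℚ) :
    epoly j (x+1) + epoly j x = 2 * x^j := by
  have expand : epoly j (x+1)
      = ∑ s ∈ range (j+1), (j.choose s : ℚ) * x^s *
          (∑ i ∈ range (j-s+1), ((j-s).choose i : ℚ) * eulerNumber i) := by
    unfold epoly
    have h1 : ∀ i ∈ range (j+1), (j.choose i : ℚ) * eulerNumber i * (x+1)^(j-i)
        = ∑ s ∈ range (j+1), (j.choose i : ℚ) * eulerNumber i * (((j-i).choose s : ℚ) * x^s) := by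
      intro i hi
      have hpow : (x+1)^(j-i) = ∑ s ∈ range (j+1), ((j-i).choose s : ℚ) * x^s := by
        rw [add_pow]
        have hsmall : ∑ s ∈ range (j-i+1), x^s * 1^(j-i-s) * ((j-i).choose s : ℚ)
            = ∑ s ∈ range (j-i+1), ((j-i).choose s : ℚ) * x^s := by
          apply Finset.sum_congr rfl; intro s hs; ring
        rw [hsmall]
        apply Finset.sum_subset (Finset.range_subset_range.mpr (by omega))
        intro s hs hns
        have : j - i < s := by
          simp only [mem_range, not_lt] at hns ⊢
          omega
        rw [Nat.choose_eq_zero_of_lt this]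
        simp
      rw [hpow, Finset.mul_sum]
    rw [Finset.sum_congr rfl h1, Finset.sum_comm]
    apply Finset.sum_congr rfl
    intro s hs
    have h2 : ∀ i ∈ range (j+1), (j.choose i : ℚ) * eulerNumber i * (((j-i).choose s : ℚ) * x^s)
        = (j.choose s : ℚ) * x^s * (((j-s).choose i : ℚ) * eulerNumber i) := by
      intro i hi
      have hc := choose_mul_choose_q j i s
      linear_combination eulerNumber i * x^s * hc
    rw [Finset.sum_congr rfl h2, ← Finset.mul_sum]
    congr 1
    have hs' : s ≤ j := Nat.lt_succ_iff.mp (mem_range.mp hs)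
    rw [← Finset.sum_subset (Finset.range_subset_range.mpr (by omega : j-s+1 ≤ j+1))]
    intro i hi hni
    have : j - s < i := by
      simp only [mem_range, not_lt] at hni
      omega
    rw [Nat.choose_eq_zero_of_lt this]
    simp
  have reflect : epoly j x = ∑ s ∈ range (j+1), (j.choose s : ℚ) * x^s * eulerNumber (j-s) := by
    unfold epoly
    rw [← Finset.sum_range_reflect (fun i => (j.choose i : ℚ) * eulerNumber i * x^(j-i)) (j+1)]
    apply Finset.sum_congr rfl
    intro s hs
    have hs' : s ≤ j := Nat.lt_succ_iff.mp (mem_range.mp hs)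
    have e1 : j + 1 - 1 - s = j - s := by omega
    have e2 : j - (j - s) = s := by omega
    rw [e1, e2, Nat.choose_symm hs']
    ring
  rw [expand, reflect, ← Finset.sum_add_distrib]
  rw [Finset.sum_eq_single_of_mem j (self_mem_range_succ j)]
  · simp [eulerNumber_zero]
    ring
  · intro s hs hsj
    have hs' : s < j := by
      have := mem_range.mp hs; omega
    have hrec := euler_rec (j-s) (by omega)
    linear_combination (j.choose s : ℚ) * x^s * hrec

lemma T_eval (j n : ℕ) (hn : Even n) :
    ∑ l ∈ range n, (-1 : ℚ)^l * (l : ℚ)^j = (eulerNumber j - epoly j n) / 2 := by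
  obtain ⟨m, rfl⟩ := hn
  induction m with
  | zero => simp [epoly_zero_eval]
  | succ m ih =>
      have e : m + 1 + (m + 1) = (m + m) + 1 + 1 := by omega
      rw [e, sum_range_succ, sum_range_succ, ih]
      have hev : Even (m + m) := ⟨m, rfl⟩
      rw [hev.neg_one_pow, pow_succ, hev.neg_one_pow]
      have h1 := epoly_add_one j ((m+m : ℕ) : ℚ)
      have h2 := epoly_add_one j (((m+m : ℕ) : ℚ) + 1)
      have c1 : ((m+m : ℕ) : ℚ) + 1 = (((m+m)+1 : ℕ) : ℚ) := by push_cast; ring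
      rw [c1] at h1 h2
      have c2 : (((m+m)+1 : ℕ) : ℚ) + 1 = (((m+m)+1+1 : ℕ) : ℚ) := by push_cast; ring
      rw [c2] at h2
      linarith [h1, h2]

lemma epoly_reflect (j : ℕ) (x : ℚ) :
    epoly j x = ∑ s ∈ range (j+1), (j.choose s : ℚ) * x^s * eulerNumber (j-s) := by
  unfold epoly
  rw [← Finset.sum_range_reflect (fun i => (j.choose i : ℚ) * eulerNumber i * x^(j-i)) (j+1)]
  apply Finset.sum_congr rfl
  intro s hs
  have hs' : s ≤ j := Nat.lt_succ_iff.mp (mem_range.mp hs)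
  have e1 : j + 1 - 1 - s = j - s := by omega
  have e2 : j - (j - s) = s := by omega
  rw [e1, e2, Nat.choose_symm hs']
  ring

lemma sum_if_epoly (j : ℕ) (x : ℚ) :
    ∑ k ∈ range (j+1), (if k = 0 then (0:ℚ) else (j.choose k : ℚ) * x^k * eulerNumber (j-k))
      = epoly j x - eulerNumber j := by
  have hsplit : ∀ k ∈ range (j+1),
      (if k = 0 then (0:ℚ) else (j.choose k : ℚ) * x^k * eulerNumber (j-k))
      = (j.choose k : ℚ) * x^k * eulerNumber (j-k)
        - (if k = 0 then (j.choose k : ℚ) * x^k * eulerNumber (j-k) else 0) := by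
    intro k _
    by_cases hk : k = 0 <;> simp [hk]
  rw [Finset.sum_congr rfl hsplit, Finset.sum_sub_distrib, ← epoly_reflect]
  congr 1
  rw [Finset.sum_ite_eq' (range (j+1)) 0
    (fun k => (j.choose k : ℚ) * x^k * eulerNumber (j-k))]
  simp



open Finset

lemma qbinom_zero (x : ℚ) : qbinom x 0 = 1 := by
  simp [qbinom]

lemma qbinom_succ (x : ℚ) (m : ℕ) :
    qbinom x (m+1) = qbinom x m * (x - m) / (m+1) := by
  unfold qbinom
  rw [descPochhammer_succ_right, Polynomial.eval_mul, Polynomial.eval_sub, Polynomial.eval_X,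
    Polynomial.eval_natCast, Nat.factorial_succ, Nat.cast_mul]
  have h1 : ((m.factorial : ℚ)) ≠ 0 := by exact_mod_cast m.factorial_ne_zero
  have h2 : ((m:ℚ)+1) ≠ 0 := by positivity
  rw [div_mul_eq_mul_div, div_div]
  push_cast
  rw [mul_comm ((m:ℚ)+1)]

lemma qbinom_neg_nat (m j : ℕ) :
    qbinom (-(m+1 : ℚ)) j = (-1)^j * ((m+j).choose j) := by
  induction j with
  | zero => simp [qbinom_zero]
  | succ j ih =>
      rw [qbinom_succ, ih, pow_succ]
      have key : ((m+j+1 : ℕ) : ℚ) * ((m+j).choose j) = ((m+j+1).choose (j+1)) * ((j:ℚ)+1) := by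
        exact_mod_cast Nat.add_one_mul_choose_eq (m+j) j
      have hj1 : ((j:ℚ)+1) ≠ 0 := by positivity
      rw [div_eq_iff hj1]
      have e : (m + (j+1)).choose (j+1) = (m+j+1).choose (j+1) := rfl
      rw [e]
      push_cast at key ⊢
      linear_combination (-(-1:ℚ)^j) * key

lemma choose_hockey (r m : ℕ) :
    ∑ i ∈ range (m+1), (r+i).choose i = (r+1+m).choose m := by
  induction m with
  | zero => simp
  | succ m ih =>
      rw [sum_range_succ, ih]
      have e : r+1+(m+1) = (r+m+1)+1 := by omega
      rw [e, Nat.choose_succ_succ (r+m+1) m]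
      congr 2 <;> omega

lemma qbinom_alt_sum (r m : ℕ) :
    ∑ i ∈ range (m+1), qbinom (-(r+1 : ℚ)) i * (-1)^(m-i)
      = qbinom (-(r+1 : ℚ) - 1) m := by
  have e : -(r+1 : ℚ) - 1 = -((r+1 : ℕ) + 1 : ℚ) := by push_cast; ring
  rw [e, qbinom_neg_nat]
  have hterm : ∀ i ∈ range (m+1), qbinom (-(r+1:ℚ)) i * (-1)^(m-i)
      = (-1)^m * ((r+i).choose i) := by
    intro i hi
    rw [qbinom_neg_nat]
    have him : i ≤ m := Nat.lt_succ_iff.mp (mem_range.mp hi)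
    have hsg : (-1:ℚ)^i * (-1:ℚ)^(m-i) = (-1)^m := by
      rw [← pow_add]; congr 1; omega
    linear_combination (((r+i).choose i : ℚ)) * hsg
  rw [Finset.sum_congr rfl hterm, ← Finset.mul_sum]
  have hh : ∑ i ∈ range (m+1), ((r+i).choose i : ℚ) = ((r+1+m).choose m : ℚ) := by
    exact_mod_cast congrArg (Nat.cast : ℕ → ℚ) (choose_hockey r m)
  rw [hh]

lemma nat_id1 (r k i : ℕ) :
    (r+k+i).choose (k+i) * (k+i).choose k = (r+k).choose k * (r+k+i).choose i := by
  have h1 : (k+i).choose k = (k+i).choose i := by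
    rw [← Nat.choose_symm (by omega : k ≤ k+i)]; congr 1; omega
  rw [h1]
  have h2 := Nat.choose_mul (n := r+k+i) (show i ≤ k+i by omega)
  rw [h2]
  have e1 : r+k+i-i = r+k := by omega
  have e2 : k+i-i = k := by omega
  rw [e1, e2, mul_comm]

lemma qbinom_prod (r k i : ℕ) :
    qbinom (-(r+1 : ℚ)) (k+i) * ((k+i).choose k : ℚ)
      = qbinom (-(r+1 : ℚ)) k * qbinom (-(r+1 : ℚ) - k) i := by
  have e : -(r+1 : ℚ) - k = -((r+k : ℕ)+1 : ℚ) := by push_cast; ring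
  rw [e, qbinom_neg_nat, qbinom_neg_nat, qbinom_neg_nat]
  have key : ((r+(k+i)).choose (k+i) : ℚ) * ((k+i).choose k) = ((r+k).choose k) * ((r+k+i).choose i) := by
    have h := nat_id1 r k i
    have e2 : r+(k+i) = r+k+i := by omega
    rw [e2]
    exact_mod_cast congrArg (Nat.cast : ℕ → ℚ) h
  calc (-1:ℚ)^(k+i) * ((r+(k+i)).choose (k+i)) * ((k+i).choose k)
      = (-1:ℚ)^(k+i) * (((r+(k+i)).choose (k+i) : ℚ) * ((k+i).choose k)) := by ring
    _ = (-1:ℚ)^(k+i) * (((r+k).choose k : ℚ) * ((r+k+i).choose i)) := by rw [key]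
    _ = (-1)^k * ((r+k).choose k) * ((-1)^i * ((r+k+i).choose i)) := by
        rw [pow_add]; ring

lemma qbinom_ratio (r k : ℕ) :
    ((r+1 : ℚ)/((r+1) + k)) * qbinom (-(r+1 : ℚ) - 1) k = qbinom (-(r+1 : ℚ)) k := by
  have e : -(r+1 : ℚ) - 1 = -((r+1 : ℕ)+1 : ℚ) := by push_cast; ring
  rw [e, qbinom_neg_nat, qbinom_neg_nat]
  have keyN : (r+1) * (r+1+k).choose k = (r+1+k) * (r+k).choose k := by
    have h1 := Nat.add_one_mul_choose_eq (r+k) k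
    rw [show r+k+1 = r+1+k from by omega] at h1
    have h2 := Nat.choose_succ_right_eq (r+1+k) k
    rw [show r+1+k-k = r+1 from by omega] at h2
    calc (r+1) * (r+1+k).choose k = (r+1+k).choose k * (r+1) := by ring
      _ = (r+1+k).choose (k+1) * (k+1) := h2.symm
      _ = (r+1+k) * (r+k).choose k := h1.symm
  have key : ((r:ℚ)+1) * ((r+1+k).choose k) = ((r:ℚ)+1+k) * ((r+k).choose k) := by
    exact_mod_cast congrArg (Nat.cast : ℕ → ℚ) keyN
  have hden : ((r:ℚ)+1) + k ≠ 0 := by positivity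
  rw [div_mul_eq_mul_div, div_eq_iff hden]
  linear_combination ((-1:ℚ)^k) * key


open Finset

section Padic
variable {p : ℕ} [hpp : Fact p.Prime]

lemma pnorm_nat_le_one (m : ℕ) : ‖(m : ℚ_[p])‖ ≤ 1 := by
  have := Padic.norm_int_le_one (p := p) (m : ℤ)
  simpa using this

lemma pnorm_two_eq_one (hp : Odd p) : ‖(2 : ℚ_[p])‖ = 1 := by
  have h2 : ((2 : ℤ) : ℚ_[p]) = (2 : ℚ_[p]) := by norm_num
  apply le_antisymm
  · rw [← h2]; exact Padic.norm_int_le_one 2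
  · by_contra h
    push_neg at h
    rw [← h2] at h
    have := (Padic.norm_intCast_lt_one_iff (p := p) (k := 2)).mp h
    have hpd : p ∣ 2 := by exact_mod_cast this
    have := (Nat.prime_dvd_prime_iff_eq hpp.out Nat.prime_two).mp hpd
    rw [this] at hp
    exact (Nat.not_odd_iff_even.mpr even_two) hp

lemma pnorm_sum_le_one {ι : Type*} (s : Finset ι) (f : ι → ℚ_[p])
    (h : ∀ i ∈ s, ‖f i‖ ≤ 1) : ‖∑ i ∈ s, f i‖ ≤ 1 := by
  classical
  induction s using Finset.induction_on with
  | empty => simp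
  | @insert a s' hx ih =>
      rw [Finset.sum_insert hx]
      refine le_trans (Padic.nonarchimedean _ _) (max_le ?_ ?_)
      · exact h a (Finset.mem_insert_self a s')
      · exact ih fun i hi => h i (Finset.mem_insert_of_mem hi)

lemma pnorm_euler_le_one (hp : Odd p) (j : ℕ) : ‖((eulerNumber j : ℚ) : ℚ_[p])‖ ≤ 1 := by
  induction j using Nat.strong_induction_on with
  | _ j ih =>
      match j with
      | 0 => simp [eulerNumber_zero]
      | n + 1 =>
          rw [eulerNumber_succ]
          push_cast
          rw [norm_mul]
          have h1 : ‖((-1 : ℚ_[p])/2)‖ = 1 := by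
            rw [norm_div, norm_neg, norm_one, pnorm_two_eq_one hp, div_one]
          rw [h1, one_mul]
          apply pnorm_sum_le_one
          intro k hk
          rw [norm_mul]
          calc ‖((n+1).choose k : ℚ_[p])‖ * ‖((eulerNumber k : ℚ) : ℚ_[p])‖
              ≤ 1 * 1 := mul_le_mul (pnorm_nat_le_one _)
                (ih k (mem_range.mp hk)) (norm_nonneg _) zero_le_one
            _ = 1 := by norm_num

lemma pnorm_qbinom_le_one (m j : ℕ) : ‖((qbinom (-(m+1 : ℚ)) j : ℚ) : ℚ_[p])‖ ≤ 1 := by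
  rw [qbinom_neg_nat]
  push_cast
  rw [norm_mul, norm_pow, norm_neg, norm_one, one_pow, one_mul]
  exact pnorm_nat_le_one _

lemma summable_norm_aux {c : ℝ} (hc0 : 0 ≤ c) (hc : c < 1) {f : ℕ → ℚ_[p]}
    (hf : ∀ j, ‖f j‖ ≤ c^j) : Summable (fun j => ‖f j‖) :=
  Summable.of_nonneg_of_le (fun _ => norm_nonneg _) hf (summable_geometric_of_lt_one hc0 hc)

lemma summable_aux {c : ℝ} (hc0 : 0 ≤ c) (hc : c < 1) {f : ℕ → ℚ_[p]}
    (hf : ∀ j, ‖f j‖ ≤ c^j) : Summable f :=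
  (summable_norm_aux hc0 hc hf).of_norm

set_option maxRecDepth 8000 in
lemma hasSum_binom (r : ℕ) {t : ℚ_[p]} (ht : ‖t‖ < 1) :
    HasSum (fun j => ((qbinom (-(r+1 : ℚ)) j : ℚ) : ℚ_[p]) * t^j) (((1+t)⁻¹)^(r+1)) := by
  induction r with
  | zero =>
      have hg := hasSum_geometric_of_norm_lt_one (ξ := -t) (by rwa [norm_neg])
      rw [sub_neg_eq_add] at hg
      have hfun : (fun j => ((qbinom (-((0:ℕ)+1 : ℚ)) j : ℚ) : ℚ_[p]) * t^j)
          = fun j => (-t)^j := by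
        funext j
        rw [qbinom_neg_nat]
        rw [Nat.zero_add, Nat.choose_self]
        push_cast
        rw [neg_pow]
        ring
      rw [hfun, pow_one]
      exact hg
  | succ r IH =>
      set c := ‖t‖ with hcdef
      have hc0 : 0 ≤ c := norm_nonneg _
      have hf : ∀ j, ‖((qbinom (-(r+1 : ℚ)) j : ℚ) : ℚ_[p]) * t^j‖ ≤ c^j := by
        intro j
        rw [norm_mul, norm_pow]
        calc ‖((qbinom (-(r+1 : ℚ)) j : ℚ) : ℚ_[p])‖ * c^j ≤ 1 * c^j := by
              apply mul_le_mul_of_nonneg_right (pnorm_qbinom_le_one r j) (pow_nonneg hc0 j)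
          _ = c^j := one_mul _
      have hg : ∀ j, ‖((-t)^j : ℚ_[p])‖ ≤ c^j := by
        intro j
        rw [norm_pow, norm_neg]
      have hnf := summable_norm_aux hc0 ht hf
      have hng := summable_norm_aux hc0 ht hg
      have heq := tsum_mul_tsum_eq_tsum_sum_antidiagonal_of_summable_norm hnf hng
      have hgsum := hasSum_geometric_of_norm_lt_one (ξ := -t) (by rwa [norm_neg])
      rw [sub_neg_eq_add] at hgsum
      -- identify the diagonal sums
      have hdiag : ∀ n, (∑ kl ∈ Finset.HasAntidiagonal.antidiagonal n,
            (((qbinom (-(r+1 : ℚ)) kl.1 : ℚ) : ℚ_[p]) * t^kl.1) * (-t)^kl.2)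
          = ((qbinom (-((r+1:ℕ)+1 : ℚ)) n : ℚ) : ℚ_[p]) * t^n := by
        intro n
        rw [Finset.Nat.sum_antidiagonal_eq_sum_range_succ_mk]
        have hterm : ∀ i ∈ range (n+1),
            (((qbinom (-(r+1 : ℚ)) i : ℚ) : ℚ_[p]) * t^i) * (-t)^(n-i)
            = ((qbinom (-(r+1 : ℚ)) i * (-1)^(n-i) : ℚ) : ℚ_[p]) * t^n := by
          intro i hi
          have hin : i ≤ n := Nat.lt_succ_iff.mp (mem_range.mp hi)
          have e : i + (n - i) = n := by omega
          calc ((qbinom (-(r+1 : ℚ)) i : ℚ) : ℚ_[p]) * t^i * (-t)^(n-i)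
              = ((qbinom (-(r+1 : ℚ)) i : ℚ) : ℚ_[p]) * ((-1)^(n-i)) * (t^i * t^(n-i)) := by
                rw [neg_pow]; ring
            _ = ((qbinom (-(r+1 : ℚ)) i : ℚ) : ℚ_[p]) * ((-1)^(n-i)) * t^n := by
                rw [← pow_add, e]
            _ = ((qbinom (-(r+1 : ℚ)) i * (-1)^(n-i) : ℚ) : ℚ_[p]) * t^n := by
                push_cast; ring
        rw [Finset.sum_congr rfl hterm, ← Finset.sum_mul, ← Rat.cast_sum]
        congr 2
        rw [qbinom_alt_sum]
        have e2 : (-(↑r+1 : ℚ)-1) = -(((r+1:ℕ) : ℚ)+1) := by push_cast; ring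
        rw [e2]
      have hsum2 : Summable (fun n => ((qbinom (-((r+1:ℕ)+1 : ℚ)) n : ℚ) : ℚ_[p]) * t^n) := by
        apply summable_aux hc0 ht
        intro j
        rw [norm_mul, norm_pow]
        calc ‖((qbinom (-((r+1:ℕ)+1 : ℚ)) j : ℚ) : ℚ_[p])‖ * c^j ≤ 1 * c^j := by
              apply mul_le_mul_of_nonneg_right (pnorm_qbinom_le_one (r+1) j) (pow_nonneg hc0 j)
          _ = c^j := one_mul _
      have hts : ∑' n, ((qbinom (-((r+1:ℕ)+1 : ℚ)) n : ℚ) : ℚ_[p]) * t^n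
          = ((1+t)⁻¹)^(r+1+1) := by
        have h1 : ∑' n, ∑ kl ∈ Finset.HasAntidiagonal.antidiagonal n,
            (((qbinom (-(r+1 : ℚ)) kl.1 : ℚ) : ℚ_[p]) * t^kl.1) * (-t)^kl.2
            = ∑' n, ((qbinom (-((r+1:ℕ)+1 : ℚ)) n : ℚ) : ℚ_[p]) * t^n := by
          apply tsum_congr hdiag
        rw [← h1, ← heq, IH.tsum_eq, hgsum.tsum_eq]
        ring
      have hfin := hsum2.hasSum
      rw [hts] at hfin
      exact hfin
  
end Padic

/-- The inner series term `binom(−s, j) (F/a)^j E_j`, viewed in `ℚ_p`. -/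
noncomputable def innerTerm (p : ℕ) [Fact p.Prime] (F a : ℕ) (s : ℚ) (j : ℕ) : ℚ_[p] :=
  (qbinom (-s) j : ℚ_[p]) * ((F : ℚ_[p]) / (a : ℚ_[p])) ^ j * (eulerNumber j : ℚ_[p])

/-- The outer series term
`(r/(r+k)) binom(−r−1, k) (nF)^k a^{−r−k} ∑_{j=0}^∞ binom(−(r+k), j)(F/a)^j E_j`. -/
noncomputable def outerTerm (p : ℕ) [Fact p.Prime] (F a n r : ℕ) (k : ℕ) : ℚ_[p] :=
  ((r : ℚ_[p]) / ((r : ℚ_[p]) + (k : ℚ_[p]))) * (qbinom (-(r : ℚ) - 1) k : ℚ_[p]) *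
    ((n * F : ℕ) : ℚ_[p]) ^ k * (a : ℚ_[p]) ^ (-(r : ℤ) - (k : ℤ)) *
    ∑' j : ℕ, innerTerm p F a ((r : ℚ) + (k : ℚ)) j


noncomputable def Gfun (p : ℕ) [Fact p.Prime] (F a n r' : ℕ) : ℕ × ℕ → ℚ_[p] := fun kl =>
  if kl.1 = 0 then 0 else
    ((qbinom (-(r'+1 : ℚ)) (kl.1+kl.2) : ℚ) : ℚ_[p]) * (((kl.1+kl.2).choose kl.1 : ℕ) : ℚ_[p]) *
      ((n : ℚ_[p]))^kl.1 * ((F : ℚ_[p]) / (a : ℚ_[p]))^(kl.1+kl.2) * ((eulerNumber kl.2 : ℚ) : ℚ_[p])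

section Regroup
variable {p : ℕ} [Fact p.Prime]

lemma tsum_antidiag {G : ℕ × ℕ → ℚ_[p]} (hG : Summable G) :
    ∑' kl : ℕ × ℕ, G kl = ∑' j : ℕ, ∑ kl ∈ Finset.HasAntidiagonal.antidiagonal j, G kl := by
  conv_rhs => congr; ext; rw [← Finset.sum_finset_coe, ← tsum_fintype (L := SummationFilter.unconditional _)]
  rw [← Finset.HasAntidiagonal.sigmaAntidiagonalEquivProd.tsum_eq G]
  exact Summable.tsum_sigma' (fun n => (hasSum_fintype _).summable)
    (Finset.HasAntidiagonal.sigmaAntidiagonalEquivProd.summable_iff.mpr hG)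

lemma pnorm_epoly_le_one (hp : Odd p) (j n : ℕ) :
    ‖((epoly j (n : ℚ) : ℚ) : ℚ_[p])‖ ≤ 1 := by
  unfold epoly
  push_cast
  apply pnorm_sum_le_one
  intro i _
  rw [norm_mul, norm_mul, norm_pow]
  have h1 : ‖((j.choose i : ℕ) : ℚ_[p])‖ ≤ 1 := pnorm_nat_le_one _
  have h2 : ‖((eulerNumber i : ℚ) : ℚ_[p])‖ ≤ 1 := pnorm_euler_le_one hp i
  have h3 : ‖((n : ℕ) : ℚ_[p])‖ ≤ 1 := pnorm_nat_le_one _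
  calc ‖((j.choose i : ℕ) : ℚ_[p])‖ * ‖((eulerNumber i : ℚ) : ℚ_[p])‖ * ‖((n:ℕ) : ℚ_[p])‖^(j-i)
      ≤ 1 * 1 * 1^(j-i) := by gcongr
    _ = 1 := by norm_num

end Regroup

/-- For an odd prime `p`, a positive odd multiple `F` of `p`, `0 < a < F` with
`gcd(a,p) = 1`, `r ≥ 1` and even `n ≥ 1`, one has in `ℚ_p`:
`∑_{l=0}^{n-1} (-1)^{Fl+a}/(Fl+a)^r
  = −((-1)^a/2) ∑_{k=1}^{∞} (r/(r+k)) binom(−r−1,k) (nF)^k a^{−r−k}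
      ∑_{j=0}^{∞} binom(−(r+k), j)(F/a)^j E_j`,
both infinite series converging `p`-adically. -/
theorem partial_sum_padic_expansion (p : ℕ) [Fact p.Prime] (hp : Odd p)
    (F : ℕ) (hFpos : 0 < F) (hFodd : Odd F) (hpF : p ∣ F)
    (a : ℕ) (ha0 : 0 < a) (haF : a < F) (hap : a.Coprime p)
    (r n : ℕ) (hr : 0 < r) (hn : 0 < n) (hne : Even n) :
    (∀ k : ℕ, 0 < k → Summable (fun j : ℕ => innerTerm p F a ((r : ℚ) + (k : ℚ)) j)) ∧
    Summable (fun k : ℕ => outerTerm p F a n r (k + 1)) ∧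
    ∑ l ∈ Finset.range n, (-1 : ℚ_[p]) ^ (F * l + a) / ((F * l + a : ℕ) : ℚ_[p]) ^ r =
      -((-1 : ℚ_[p]) ^ a / 2) * ∑' k : ℕ, outerTerm p F a n r (k + 1) := by
  obtain ⟨r', rfl⟩ : ∃ r', r = r' + 1 := ⟨r - 1, by omega⟩
  set A : ℚ_[p] := (a : ℚ_[p]) with hAdef
  have hA0 : A ≠ 0 := by
    rw [hAdef]; exact_mod_cast Nat.cast_ne_zero.mpr ha0.ne'
  have hnormA : ‖A‖ = 1 := by
    rw [hAdef]
    have hle : ‖((a : ℤ) : ℚ_[p])‖ ≤ 1 := Padic.norm_int_le_one _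
    have hcst : ((a : ℤ) : ℚ_[p]) = (a : ℚ_[p]) := by push_cast; rfl
    rw [hcst] at hle
    refine le_antisymm hle (le_of_not_gt fun hlt => ?_)
    rw [← hcst] at hlt
    have hdvd : (p : ℤ) ∣ (a : ℤ) := Padic.norm_intCast_lt_one_iff.mp hlt
    have hdvd' : p ∣ a := by exact_mod_cast hdvd
    have h1 : p ∣ Nat.gcd a p := Nat.dvd_gcd hdvd' dvd_rfl
    rw [hap] at h1
    have := Nat.le_of_dvd one_pos h1
    have h2 := Nat.Prime.two_le (Fact.out : p.Prime)
    omega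
  have hnormF : ‖(F : ℚ_[p])‖ < 1 := by
    have hcst : ((F : ℤ) : ℚ_[p]) = (F : ℚ_[p]) := by push_cast; rfl
    rw [← hcst]
    exact Padic.norm_intCast_lt_one_iff.mpr (by exact_mod_cast hpF)
  set c : ℝ := ‖(F : ℚ_[p]) / A‖ with hcdef
  have hc0 : 0 ≤ c := norm_nonneg _
  have hc : c < 1 := by rw [hcdef, norm_div, hnormA, div_one]; exact hnormF
  have harg : ∀ k : ℕ, -((((r'+1:ℕ)) : ℚ) + (k : ℚ)) = -((((r'+k : ℕ)) : ℚ) + 1) := by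
    intro k; push_cast; ring
  -- inner summability
  have hInnerBound : ∀ k j : ℕ, ‖innerTerm p F a (((r'+1:ℕ) : ℚ) + (k : ℚ)) j‖ ≤ c^j := by
    intro k j
    unfold innerTerm
    rw [harg k, norm_mul, norm_mul, norm_pow]
    have h1 : ‖((qbinom (-(((r'+k : ℕ)) : ℚ) - 1 + 0) j : ℚ) : ℚ_[p])‖ ≤ 1 := by
      have := pnorm_qbinom_le_one (p := p) (r'+k) j
      convert this using 4
      ring
    have h1' : ‖((qbinom (-((((r'+k : ℕ)) : ℚ) + 1)) j : ℚ) : ℚ_[p])‖ ≤ 1 := by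
      have := pnorm_qbinom_le_one (p := p) (r'+k) j
      exact this
    have h2 : ‖((eulerNumber j : ℚ) : ℚ_[p])‖ ≤ 1 := pnorm_euler_le_one hp j
    calc ‖((qbinom (-((((r'+k : ℕ)) : ℚ) + 1)) j : ℚ) : ℚ_[p])‖ * ‖(F : ℚ_[p]) / (a : ℚ_[p])‖^j *
          ‖((eulerNumber j : ℚ) : ℚ_[p])‖
        ≤ 1 * c^j * 1 := by
          rw [hcdef, hAdef]
          gcongr
      _ = c^j := by ring
  have hInner : ∀ k : ℕ, Summable (fun j : ℕ => innerTerm p F a (((r'+1:ℕ) : ℚ) + (k : ℚ)) j) :=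
    fun k => summable_aux hc0 hc (hInnerBound k)
  -- bound on the inner tsum
  set C0 : ℝ := (1 - c)⁻¹ with hC0def
  have hC0 : 0 ≤ C0 := by rw [hC0def, inv_nonneg]; linarith
  have hStsumBound : ∀ k : ℕ, ‖∑' j : ℕ, innerTerm p F a (((r'+1:ℕ) : ℚ) + (k : ℚ)) j‖ ≤ C0 := by
    intro k
    have hns := summable_norm_aux hc0 hc (hInnerBound k)
    have h1 := norm_tsum_le_tsum_norm hns
    have h2 : ∑' j : ℕ, ‖innerTerm p F a (((r'+1:ℕ) : ℚ) + (k : ℚ)) j‖ ≤ ∑' j : ℕ, c^j :=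
      Summable.tsum_le_tsum (hInnerBound k) hns (summable_geometric_of_lt_one hc0 hc)
    rw [tsum_geometric_of_lt_one hc0 hc] at h2
    exact h1.trans h2
  -- outer term in reduced form
  have hOuterEq : ∀ k : ℕ, outerTerm p F a n (r'+1) k
      = ((qbinom (-(↑r'+1 : ℚ)) k : ℚ) : ℚ_[p]) * ((n * F : ℕ) : ℚ_[p])^k *
          A ^ (-((r'+1 : ℕ) : ℤ) - (k : ℤ)) *
          ∑' j : ℕ, innerTerm p F a (((r'+1:ℕ) : ℚ) + (k : ℚ)) j := by
    intro k
    unfold outerTerm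
    have h1 : (((r'+1:ℕ) : ℚ_[p]) / (((r'+1:ℕ) : ℚ_[p]) + ((k:ℕ) : ℚ_[p]))) *
        ((qbinom (-((r'+1:ℕ) : ℚ) - 1) k : ℚ) : ℚ_[p])
        = ((qbinom (-(↑r'+1:ℚ)) k : ℚ) : ℚ_[p]) := by
      have hq := congrArg (fun q : ℚ => (q : ℚ_[p])) (qbinom_ratio r' k)
      push_cast at hq ⊢
      exact hq
    rw [h1]
  set cNF : ℝ := ‖((n * F : ℕ) : ℚ_[p])‖ with hcNFdef
  have hcNF0 : 0 ≤ cNF := norm_nonneg _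
  have hcNF : cNF < 1 := by
    rw [hcNFdef]
    push_cast
    rw [norm_mul]
    calc ‖(n : ℚ_[p])‖ * ‖(F : ℚ_[p])‖ ≤ 1 * ‖(F : ℚ_[p])‖ :=
          mul_le_mul_of_nonneg_right (pnorm_nat_le_one n) (norm_nonneg _)
      _ = ‖(F : ℚ_[p])‖ := one_mul _
      _ < 1 := hnormF
  have hnormzpow : ∀ z : ℤ, ‖A ^ z‖ = 1 := by
    intro z; rw [norm_zpow, hnormA, one_zpow]
  have hOuterBound : ∀ k : ℕ, ‖outerTerm p F a n (r'+1) k‖ ≤ cNF^k * C0 := by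
    intro k
    rw [hOuterEq k, norm_mul, norm_mul, norm_mul, norm_pow, hnormzpow]
    have h1 : ‖((qbinom (-(↑r'+1:ℚ)) k : ℚ) : ℚ_[p])‖ ≤ 1 := pnorm_qbinom_le_one r' k
    calc ‖((qbinom (-(↑r'+1:ℚ)) k : ℚ) : ℚ_[p])‖ * cNF^k * 1 *
          ‖∑' j : ℕ, innerTerm p F a (((r'+1:ℕ) : ℚ) + (k : ℚ)) j‖
        ≤ 1 * cNF^k * 1 * C0 := by gcongr; exact hStsumBound k
      _ = cNF^k * C0 := by ring
  have hOuterSummable : Summable (fun k : ℕ => outerTerm p F a n (r'+1) (k + 1)) := by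
    apply Summable.of_norm
    apply Summable.of_nonneg_of_le (fun k => norm_nonneg _)
      (fun k => hOuterBound (k+1))
    have : (fun k : ℕ => cNF^(k+1) * C0) = fun k => (cNF * C0) * cNF^k := by
      funext k; ring
    rw [this]
    exact (summable_geometric_of_lt_one hcNF0 hcNF).mul_left _
  refine ⟨fun k _ => hInner k, hOuterSummable, ?_⟩
  -- G facts
  have hGb : ∀ kl : ℕ × ℕ, ‖Gfun p F a n r' kl‖ ≤ c^kl.1 * c^kl.2 := by
    rintro ⟨k, i⟩
    by_cases hk : k = 0
    · simp only [Gfun, hk, if_pos]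
      simp only [norm_zero]
      positivity
    · simp only [Gfun, if_neg hk]
      rw [norm_mul, norm_mul, norm_mul, norm_mul, norm_pow, norm_pow]
      have h1 := pnorm_qbinom_le_one (p := p) r' (k+i)
      have h2 : ‖(((k+i).choose k : ℕ) : ℚ_[p])‖ ≤ 1 := pnorm_nat_le_one _
      have h3 : ‖(n : ℚ_[p])‖ ≤ 1 := pnorm_nat_le_one n
      have h4 := pnorm_euler_le_one (p := p) hp i
      calc ‖((qbinom (-(↑r'+1:ℚ)) (k+i) : ℚ) : ℚ_[p])‖ * ‖(((k+i).choose k : ℕ) : ℚ_[p])‖ *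
            ‖(n : ℚ_[p])‖^k * ‖(F : ℚ_[p]) / (a : ℚ_[p])‖^(k+i) * ‖((eulerNumber i : ℚ) : ℚ_[p])‖
          ≤ 1 * 1 * 1^k * c^(k+i) * 1 := by
            rw [hcdef, hAdef]
            gcongr
        _ = c^k * c^i := by rw [pow_add]; ring
  have hGsum : Summable (Gfun p F a n r') := by
    apply Summable.of_norm
    apply Summable.of_nonneg_of_le (fun kl => norm_nonneg _) hGb
    exact Summable.mul_of_nonneg (summable_geometric_of_lt_one hc0 hc)
      (summable_geometric_of_lt_one hc0 hc) (fun _ => pow_nonneg hc0 _)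
      (fun _ => pow_nonneg hc0 _)
  have hDiag : ∀ j : ℕ, ∑ kl ∈ Finset.HasAntidiagonal.antidiagonal j, Gfun p F a n r' kl
      = ((qbinom (-(↑r'+1:ℚ)) j : ℚ) : ℚ_[p]) * ((F : ℚ_[p]) / A)^j *
        (((epoly j (n:ℚ) : ℚ) : ℚ_[p]) - ((eulerNumber j : ℚ) : ℚ_[p])) := by
    intro j
    rw [Finset.Nat.sum_antidiagonal_eq_sum_range_succ_mk]
    have hterm : ∀ k ∈ Finset.range (j+1), Gfun p F a n r' (k, j-k)
        = (((qbinom (-(↑r'+1:ℚ)) j : ℚ) : ℚ_[p]) * ((F : ℚ_[p]) / A)^j) *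
          (((if k = 0 then (0:ℚ) else (j.choose k : ℚ) * (n:ℚ)^k * eulerNumber (j-k)) : ℚ) : ℚ_[p]) := by
      intro k hk
      have hkj : k ≤ j := Nat.lt_succ_iff.mp (Finset.mem_range.mp hk)
      have e : k + (j-k) = j := by omega
      by_cases hk0 : k = 0
      · subst hk0
        simp [Gfun]
      · simp only [Gfun, if_neg hk0]
        rw [hAdef, e]
        push_cast
        ring
    rw [Finset.sum_congr rfl hterm, ← Finset.mul_sum, ← Rat.cast_sum, sum_if_epoly]
    push_cast
    try rfl
    try ring
  have hColumn : ∀ k : ℕ, (∑' i : ℕ, Gfun p F a n r' (k+1, i))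
      = A^(r'+1) * outerTerm p F a n (r'+1) (k+1) := by
    intro k
    have hcol : ∀ i : ℕ, Gfun p F a n r' (k+1, i)
        = ((((qbinom (-(↑r'+1:ℚ)) (k+1) : ℚ) : ℚ_[p])) * (n : ℚ_[p])^(k+1) *
            ((F : ℚ_[p]) / (a : ℚ_[p]))^(k+1)) *
          innerTerm p F a (((r'+1:ℕ) : ℚ) + ((k+1:ℕ) : ℚ)) i := by
      intro i
      simp only [Gfun, if_neg (Nat.succ_ne_zero k)]
      unfold innerTerm
      rw [harg (k+1), pow_add]
      have hq := congrArg (fun q : ℚ => (q : ℚ_[p])) (qbinom_prod r' (k+1) i)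
      rw [Rat.cast_mul, Rat.cast_mul, Rat.cast_natCast] at hq
      have e2 : (-(↑r'+1 : ℚ) - ((k+1 : ℕ) : ℚ)) = -((((r'+(k+1) : ℕ)) : ℚ) + 1) := by
        push_cast; ring
      rw [e2] at hq
      linear_combination (((n : ℚ_[p]))^(k+1) * ((F:ℚ_[p])/(a:ℚ_[p]))^(k+1) *
        ((F:ℚ_[p])/(a:ℚ_[p]))^i * ((eulerNumber i : ℚ) : ℚ_[p])) * hq
    rw [tsum_congr hcol, tsum_mul_left, hOuterEq (k+1)]
    have hzp : A ^ (-((r'+1 : ℕ) : ℤ) - ((k+1 : ℕ) : ℤ)) = (A^(r'+1) * A^(k+1))⁻¹ := by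
      rw [show -((r'+1 : ℕ) : ℤ) - ((k+1 : ℕ) : ℤ) = -(((r'+1)+(k+1) : ℕ) : ℤ) by push_cast; ring,
        zpow_neg, zpow_natCast, pow_add]
    rw [hzp]
    have hnf : ((n * F : ℕ) : ℚ_[p]) = (n : ℚ_[p]) * (F : ℚ_[p]) := by push_cast; ring
    rw [hnf, ← hAdef]
    have hAinv1 : A^(r'+1) * (A^(r'+1))⁻¹ = 1 := mul_inv_cancel₀ (pow_ne_zero _ hA0)
    linear_combination (-(((qbinom (-(↑r'+1:ℚ)) (k+1) : ℚ) : ℚ_[p]) * (n : ℚ_[p])^(k+1) *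
      ((F : ℚ_[p]) / A)^(k+1) * ∑' j : ℕ, innerTerm p F a (((r'+1:ℕ) : ℚ) + ((k+1:ℕ) : ℚ)) j)) * hAinv1
  have hHk : Summable (fun k : ℕ => ∑' i : ℕ, Gfun p F a n r' (k, i)) := by
    apply (summable_nat_add_iff 1).mp
    exact Summable.congr (hOuterSummable.mul_left (A^(r'+1))) (fun k => (hColumn k).symm)
  have hGsplit : (∑' kl : ℕ × ℕ, Gfun p F a n r' kl)
      = A^(r'+1) * ∑' k : ℕ, outerTerm p F a n (r'+1) (k+1) := by
    rw [Summable.tsum_prod hGsum, Summable.tsum_eq_zero_add hHk]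
    have h0 : (∑' i : ℕ, Gfun p F a n r' (0, i)) = 0 := by
      convert tsum_zero with i
      try simp [Gfun]
    rw [h0, zero_add, tsum_congr hColumn, tsum_mul_left]
  -- summability of the two j-series
  have hSE : Summable (fun j : ℕ => ((qbinom (-(↑r'+1:ℚ)) j : ℚ) : ℚ_[p]) *
      ((F : ℚ_[p]) / A)^j * ((eulerNumber j : ℚ) : ℚ_[p])) := by
    apply summable_aux hc0 hc
    intro j
    rw [norm_mul, norm_mul, norm_pow]
    calc ‖((qbinom (-(↑r'+1:ℚ)) j : ℚ) : ℚ_[p])‖ * ‖(F : ℚ_[p]) / A‖^j *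
          ‖((eulerNumber j : ℚ) : ℚ_[p])‖
        ≤ 1 * c^j * 1 := by
          rw [hcdef]
          gcongr
          · exact pnorm_qbinom_le_one r' j
          · exact pnorm_euler_le_one hp j
      _ = c^j := by ring
  have hSP : Summable (fun j : ℕ => ((qbinom (-(↑r'+1:ℚ)) j : ℚ) : ℚ_[p]) *
      ((F : ℚ_[p]) / A)^j * ((epoly j (n:ℚ) : ℚ) : ℚ_[p])) := by
    apply summable_aux hc0 hc
    intro j
    rw [norm_mul, norm_mul, norm_pow]
    calc ‖((qbinom (-(↑r'+1:ℚ)) j : ℚ) : ℚ_[p])‖ * ‖(F : ℚ_[p]) / A‖^j *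
          ‖((epoly j (n:ℚ) : ℚ) : ℚ_[p])‖
        ≤ 1 * c^j * 1 := by
          rw [hcdef]
          gcongr
          · exact pnorm_qbinom_le_one r' j
          · exact pnorm_epoly_le_one hp j n
      _ = c^j := by ring
  have hTcast : ∀ j : ℕ, (∑ l ∈ Finset.range n, (-1 : ℚ_[p])^l * (l : ℚ_[p])^j)
      = (((eulerNumber j : ℚ) : ℚ_[p]) - ((epoly j (n:ℚ) : ℚ) : ℚ_[p])) * (2 : ℚ_[p])⁻¹ := by
    intro j
    have h1 := congrArg (fun q : ℚ => (q : ℚ_[p])) (T_eval j n hne)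
    push_cast at h1
    rw [div_eq_mul_inv] at h1
    exact h1
  -- per-l expansion
  have hLl : ∀ l ∈ Finset.range n, (-1 : ℚ_[p])^(F*l+a) / ((F*l+a : ℕ) : ℚ_[p])^(r'+1)
      = ((-1:ℚ_[p])^a * (A^(r'+1))⁻¹) * ((-1:ℚ_[p])^l *
          ∑' j : ℕ, ((qbinom (-(↑r'+1:ℚ)) j : ℚ) : ℚ_[p]) * ((F : ℚ_[p]) / A)^j * ((l:ℚ_[p]))^j) := by
    intro l _
    set t : ℚ_[p] := (F : ℚ_[p]) * (l : ℚ_[p]) / A with htdef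
    have ht : ‖t‖ < 1 := by
      rw [htdef, norm_div, hnormA, div_one, norm_mul]
      calc ‖(F:ℚ_[p])‖ * ‖(l:ℚ_[p])‖ ≤ ‖(F:ℚ_[p])‖ * 1 :=
            mul_le_mul_of_nonneg_left (pnorm_nat_le_one l) (norm_nonneg _)
        _ = ‖(F:ℚ_[p])‖ := mul_one _
        _ < 1 := hnormF
    have hbin := hasSum_binom r' ht
    have hcastFl : ((F*l+a : ℕ) : ℚ_[p]) = A * (1+t) := by
      rw [htdef, hAdef]
      push_cast
      have ha' : (a : ℚ_[p]) ≠ 0 := hA0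
      field_simp
      ring
    have hsign : (-1 : ℚ_[p])^(F*l+a) = (-1)^l * (-1)^a := by
      rw [pow_add, pow_mul, hFodd.neg_one_pow]
    have htt : t = ((F:ℚ_[p])/A) * (l:ℚ_[p]) := by rw [htdef]; ring
    have htsum : (∑' j : ℕ, ((qbinom (-(↑r'+1:ℚ)) j : ℚ) : ℚ_[p]) * ((F : ℚ_[p]) / A)^j *
        ((l:ℚ_[p]))^j) = ((1+t)⁻¹)^(r'+1) := by
      rw [← hbin.tsum_eq]
      apply tsum_congr
      intro j
      rw [htt, mul_pow]
      ring
    have hB0 : (1+t) ≠ 0 := by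
      intro h
      have htm : t = -1 := by linear_combination h
      rw [htm] at ht
      simp at ht
    rw [hcastFl, hsign, htsum, mul_pow]
    generalize (1+t) = B
    ring
  -- per-l summability of the j-series with the (-1)^l factor
  have hgl : ∀ l ∈ Finset.range n, Summable (fun j : ℕ =>
      (-1:ℚ_[p])^l * (((qbinom (-(↑r'+1:ℚ)) j : ℚ) : ℚ_[p]) * ((F : ℚ_[p]) / A)^j *
        ((l:ℚ_[p]))^j)) := by
    intro l _
    apply Summable.mul_left
    apply summable_aux hc0 hc
    intro j
    rw [norm_mul, norm_mul, norm_pow, norm_pow]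
    calc ‖((qbinom (-(↑r'+1:ℚ)) j : ℚ) : ℚ_[p])‖ * ‖(F : ℚ_[p]) / A‖^j * ‖(l:ℚ_[p])‖^j
        ≤ 1 * c^j * 1^j := by
          rw [hcdef]
          gcongr
          · exact pnorm_qbinom_le_one r' j
          · exact pnorm_nat_le_one l
      _ = c^j := by rw [one_pow]; ring
  -- the key rearrangement
  have hkey : (∑' j : ℕ, ((qbinom (-(↑r'+1:ℚ)) j : ℚ) : ℚ_[p]) * ((F : ℚ_[p]) / A)^j *
        ((epoly j (n:ℚ) : ℚ) : ℚ_[p]))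
      - (∑' j : ℕ, ((qbinom (-(↑r'+1:ℚ)) j : ℚ) : ℚ_[p]) * ((F : ℚ_[p]) / A)^j *
        ((eulerNumber j : ℚ) : ℚ_[p]))
      = A^(r'+1) * ∑' k : ℕ, outerTerm p F a n (r'+1) (k+1) := by
    rw [← Summable.tsum_sub hSP hSE]
    calc (∑' j : ℕ, (((qbinom (-(↑r'+1:ℚ)) j : ℚ) : ℚ_[p]) * ((F : ℚ_[p]) / A)^j *
            ((epoly j (n:ℚ) : ℚ) : ℚ_[p])
          - ((qbinom (-(↑r'+1:ℚ)) j : ℚ) : ℚ_[p]) * ((F : ℚ_[p]) / A)^j *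
            ((eulerNumber j : ℚ) : ℚ_[p])))
        = ∑' j : ℕ, ∑ kl ∈ Finset.HasAntidiagonal.antidiagonal j, Gfun p F a n r' kl := by
          apply tsum_congr
          intro j
          rw [hDiag j]
          ring
      _ = ∑' kl : ℕ × ℕ, Gfun p F a n r' kl := (tsum_antidiag hGsum).symm
      _ = A^(r'+1) * ∑' k : ℕ, outerTerm p F a n (r'+1) (k+1) := hGsplit
  -- final assembly
  have hAinv : (A^(r'+1))⁻¹ * A^(r'+1) = 1 := inv_mul_cancel₀ (pow_ne_zero _ hA0)
  calc ∑ l ∈ Finset.range n, (-1 : ℚ_[p])^(F*l+a) / ((F*l+a : ℕ) : ℚ_[p])^(r'+1)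
      = ∑ l ∈ Finset.range n, ((-1:ℚ_[p])^a * (A^(r'+1))⁻¹) * ((-1:ℚ_[p])^l *
          ∑' j : ℕ, ((qbinom (-(↑r'+1:ℚ)) j : ℚ) : ℚ_[p]) * ((F : ℚ_[p]) / A)^j * ((l:ℚ_[p]))^j) :=
        Finset.sum_congr rfl hLl
    _ = ((-1:ℚ_[p])^a * (A^(r'+1))⁻¹) * ∑ l ∈ Finset.range n,
          ∑' j : ℕ, ((-1:ℚ_[p])^l * (((qbinom (-(↑r'+1:ℚ)) j : ℚ) : ℚ_[p]) *
            ((F : ℚ_[p]) / A)^j * ((l:ℚ_[p]))^j)) := by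
        rw [← Finset.mul_sum]
        congr 1
        apply Finset.sum_congr rfl
        intro l _
        rw [← tsum_mul_left]
    _ = ((-1:ℚ_[p])^a * (A^(r'+1))⁻¹) * ∑' j : ℕ, ∑ l ∈ Finset.range n,
          ((-1:ℚ_[p])^l * (((qbinom (-(↑r'+1:ℚ)) j : ℚ) : ℚ_[p]) *
            ((F : ℚ_[p]) / A)^j * ((l:ℚ_[p]))^j)) := by
        rw [Summable.tsum_finsetSum hgl]
    _ = ((-1:ℚ_[p])^a * (A^(r'+1))⁻¹) * ∑' j : ℕ,
          (((qbinom (-(↑r'+1:ℚ)) j : ℚ) : ℚ_[p]) * ((F : ℚ_[p]) / A)^j *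
            ∑ l ∈ Finset.range n, (-1:ℚ_[p])^l * ((l:ℚ_[p]))^j) := by
        congr 1
        apply tsum_congr
        intro j
        rw [Finset.mul_sum]
        apply Finset.sum_congr rfl
        intro l _
        ring
    _ = ((-1:ℚ_[p])^a * (A^(r'+1))⁻¹) * ∑' j : ℕ,
          ((((qbinom (-(↑r'+1:ℚ)) j : ℚ) : ℚ_[p]) * ((F : ℚ_[p]) / A)^j *
            ((eulerNumber j : ℚ) : ℚ_[p])
          - ((qbinom (-(↑r'+1:ℚ)) j : ℚ) : ℚ_[p]) * ((F : ℚ_[p]) / A)^j *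
            ((epoly j (n:ℚ) : ℚ) : ℚ_[p])) * (2:ℚ_[p])⁻¹) := by
        congr 1
        apply tsum_congr
        intro j
        rw [hTcast j]
        ring
    _ = ((-1:ℚ_[p])^a * (A^(r'+1))⁻¹) *
          (((∑' j : ℕ, ((qbinom (-(↑r'+1:ℚ)) j : ℚ) : ℚ_[p]) * ((F : ℚ_[p]) / A)^j *
            ((eulerNumber j : ℚ) : ℚ_[p]))
          - (∑' j : ℕ, ((qbinom (-(↑r'+1:ℚ)) j : ℚ) : ℚ_[p]) * ((F : ℚ_[p]) / A)^j *
            ((epoly j (n:ℚ) : ℚ) : ℚ_[p]))) * (2:ℚ_[p])⁻¹) := by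
        rw [tsum_mul_right, Summable.tsum_sub hSE hSP]
    _ = -((-1 : ℚ_[p])^a / 2) * ∑' k : ℕ, outerTerm p F a n (r'+1) (k+1) := by
        have h5 : (∑' j : ℕ, ((qbinom (-(↑r'+1:ℚ)) j : ℚ) : ℚ_[p]) * ((F : ℚ_[p]) / A)^j *
              ((eulerNumber j : ℚ) : ℚ_[p]))
            - (∑' j : ℕ, ((qbinom (-(↑r'+1:ℚ)) j : ℚ) : ℚ_[p]) * ((F : ℚ_[p]) / A)^j *
              ((epoly j (n:ℚ) : ℚ) : ℚ_[p]))
            = -(A^(r'+1) * ∑' k : ℕ, outerTerm p F a n (r'+1) (k+1)) := by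
          rw [← hkey]; ring
        rw [h5, div_eq_mul_inv]
        linear_combination (-((-1:ℚ_[p])^a) * (2:ℚ_[p])⁻¹ *
          (∑' k : ℕ, outerTerm p F a n (r'+1) (k+1))) * hAinv
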